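/- Define γ₁¹ : [0,1] → S³ ⊂ ℝ⁴ by γ₁¹(t) = ( (1/4)cos(3πt/2) + (3/4)cos(πt/2), (√3/4)sin(3πt/2) + (√3/4)sin(πt/2), (√3/4)cos(πt/2) − (√3/4)cos(3πt/2), (3/4)sin(πt/2) − (1/4)sin(3πt/2) ). Then γ₁¹ is convex: for every nonzero h ∈ ℝ⁴, γ₁¹ intersects the hyperplane {x ∈ ℝ⁴ : h·x = 0} with total multiplicity at most 3 on (0,1). -/

import Mathlib

open Set Real

/-- The Euclidean dot product on `ℝ^k`. -/
def dotv {k : ℕ} (v w : Fin k → ℝ) : ℝ := ∑ i, v i * w i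

/-- The curve `γ` intersects the hyperplane `{x : h·x = 0}` with total multiplicity at
most `N` on the open interval `(a,b)`: for any distinct points `t₁, …, t_j ∈ (a,b)` and
positive integers `m₁, …, m_j` such that `f = h·γ` vanishes at `t_i` together with its
first `m_i − 1` derivatives, one has `m₁ + ⋯ + m_j ≤ N`. -/
def MultAtMost {k : ℕ} (γ : ℝ → Fin k → ℝ) (a b : ℝ) (h : Fin k → ℝ) (N : ℕ) : Prop :=
  ∀ (j : ℕ) (t : Fin j → ℝ) (m : Fin j → ℕ),
    (∀ i, t i ∈ Ioo a b) → Function.Injective t → (∀ i, 1 ≤ m i) →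
    (∀ i, ∀ l < m i, iteratedDeriv l (fun s => dotv h (γ s)) (t i) = 0) →
    ∑ i, m i ≤ N

/-- The curve `γ₁¹ : [0,1] → S³`. -/
noncomputable def gamma11 (t : ℝ) : Fin 4 → ℝ :=
  ![1 / 4 * Real.cos (3 * π * t / 2) + 3 / 4 * Real.cos (π * t / 2),
    Real.sqrt 3 / 4 * Real.sin (3 * π * t / 2) + Real.sqrt 3 / 4 * Real.sin (π * t / 2),
    Real.sqrt 3 / 4 * Real.cos (π * t / 2) - Real.sqrt 3 / 4 * Real.cos (3 * π * t / 2),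
    3 / 4 * Real.sin (π * t / 2) - 1 / 4 * Real.sin (3 * π * t / 2)]

/-! With `θ = πt/2`, the function `h·γ₁¹(t)` is a trigonometric polynomial
`a cos 3θ + b sin 3θ + c cos θ + d sin θ`, and `2e^{3iθ}` times it is a complex cubic `Q`,
nonzero when `h ≠ 0`, evaluated at `z = e^{2iθ} = e^{iπt}`. Under this substitution `d/dt`
becomes the Euler operator `iπ z d/dz`, which lowers the multiplicity of a nonzero root by one,
so a zero of order `m` at `t` gives a root of `Q` of multiplicity at least `m` at `e^{iπt}`.
As `t ↦ e^{iπt}` is injective on `(0,1)`, the orders add up to at most `deg Q ≤ 3`. -/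

open Polynomial Complex Function
open scoped ContDiff

lemma derivative_ne_zero_of_isRoot {R : Type*} [Semiring R] [IsAddTorsionFree R] {Q : R[X]}
    {z : R} (hQ : Q ≠ 0) (hz : Q.IsRoot z) : derivative Q ≠ 0 := by
  intro h
  rw [eq_C_of_derivative_eq_zero h] at hQ hz
  simp_all

section EulerOperator

variable {R : Type*} [CommRing R]

noncomputable def eulerOp (c : R) (Q : R[X]) : R[X] := C c * X * derivative Q

variable [IsDomain R] [CharZero R]

lemma rootMultiplicity_eulerOp {c z : R} (hc : c ≠ 0) (hz : z ≠ 0) {Q : R[X]} (hQ : Q ≠ 0)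
    (hQz : Q.IsRoot z) :
    (eulerOp c Q).rootMultiplicity z = Q.rootMultiplicity z - 1 := by
  have hQ' := derivative_ne_zero_of_isRoot hQ hQz
  have hcX : C c * X ≠ 0 := mul_ne_zero (C_ne_zero.2 hc) X_ne_zero
  rw [eulerOp, rootMultiplicity_mul (mul_ne_zero hcX hQ'), rootMultiplicity_mul hcX,
    rootMultiplicity_C, rootMultiplicity_eq_zero (by simpa using hz),
    derivative_rootMultiplicity_of_root hQz, zero_add, zero_add]

lemma le_rootMultiplicity_of_eval_eulerOp_iterate_eq_zero {c z : R} (hc : c ≠ 0) (hz : z ≠ 0)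
    {m : ℕ} {Q : R[X]} (hQ : Q ≠ 0) (hvan : ∀ l < m, ((eulerOp c)^[l] Q).eval z = 0) :
    m ≤ Q.rootMultiplicity z := by
  cases m with
  | zero => exact Nat.zero_le _
  | succ m =>
    have hQz : Q.IsRoot z := hvan 0 m.succ_pos
    have hEQ : eulerOp c Q ≠ 0 :=
      mul_ne_zero (mul_ne_zero (C_ne_zero.2 hc) X_ne_zero) (derivative_ne_zero_of_isRoot hQ hQz)
    have := le_rootMultiplicity_of_eval_eulerOp_iterate_eq_zero (m := m) hc hz hEQ fun l hl =>
      hvan (l + 1) (by omega)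
    rw [rootMultiplicity_eulerOp hc hz hQ hQz] at this
    have := (rootMultiplicity_pos hQ).2 hQz
    omega

end EulerOperator

lemma sum_rootMultiplicity_le_natDegree {R : Type*} [CommRing R] [IsDomain R] (Q : R[X])
    (S : Finset R) : ∑ z ∈ S, Q.rootMultiplicity z ≤ Q.natDegree := by
  classical
  calc ∑ z ∈ S, Q.rootMultiplicity z = ∑ z ∈ S, Q.roots.count z := by simp [count_roots]
    _ ≤ ∑ z ∈ S ∪ Q.roots.toFinset, Q.roots.count z :=
      Finset.sum_le_sum_of_subset Finset.subset_union_left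
    _ = Multiset.card Q.roots := Multiset.sum_count_eq_card fun z hz => by simp [hz]
    _ ≤ Q.natDegree := card_roots' Q

lemma deriv_eval_cexp_mul (c : ℂ) (Q : ℂ[X]) :
    deriv (fun t : ℝ => Q.eval (cexp (c * t))) =
      fun t : ℝ => (eulerOp c Q).eval (cexp (c * t)) := by
  funext t
  have hexp : HasDerivAt (fun z : ℂ => cexp (c * z)) (cexp (c * t) * c) t := by
    simpa using ((hasDerivAt_id (t : ℂ)).const_mul c).cexp
  have hcomp : HasDerivAt (fun z : ℂ => Q.eval (cexp (c * z)))
      (Q.derivative.eval (cexp (c * t)) * (cexp (c * t) * c)) t :=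
    (Q.hasDerivAt _).comp _ hexp
  rw [hcomp.comp_ofReal.deriv]
  simp only [eulerOp, eval_mul, eval_C, eval_X]
  ring

lemma iteratedDeriv_eval_cexp_mul (c : ℂ) (l : ℕ) (Q : ℂ[X]) (t₀ : ℝ) :
    iteratedDeriv l (fun t : ℝ => Q.eval (cexp (c * t))) t₀ =
      ((eulerOp c)^[l] Q).eval (cexp (c * t₀)) := by
  induction l generalizing Q with
  | zero => rfl
  | succ l ih => rw [iteratedDeriv_succ', deriv_eval_cexp_mul, ih, iterate_succ_apply]

lemma iteratedDeriv_ofReal_comp {f : ℝ → ℝ} {x : ℝ} {n : ℕ} (hf : ContDiffAt ℝ n f x) :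
    iteratedDeriv n (fun s => (f s : ℂ)) x = iteratedDeriv n f x := by
  simp only [iteratedDeriv_eq_iteratedFDeriv]
  exact congrArg (· fun _ => 1) (ofRealCLM.iteratedFDeriv_comp_left hf le_rfl)

lemma iteratedDeriv_mul_eq_zero {u g : ℝ → ℂ} {x : ℝ} {n : ℕ} (hu : ContDiffAt ℝ n u x)
    (hg : ContDiffAt ℝ n g x) (hvan : ∀ l ≤ n, iteratedDeriv l g x = 0) :
    iteratedDeriv n (fun s => u s * g s) x = 0 := by
  rw [iteratedDeriv_fun_mul hu hg]
  exact Finset.sum_eq_zero fun i _ => by rw [hvan (n - i) (Nat.sub_le n i), mul_zero]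

theorem sum_le_natDegree_of_iteratedDeriv_eq_zero {ι : Type*} [Fintype ι] {Q : ℂ[X]}
    (hQ : Q ≠ 0) {c : ℂ} (hc : c ≠ 0) {u : ℝ → ℂ} (hu : ContDiff ℝ ∞ u) {f : ℝ → ℝ}
    (hf : ContDiff ℝ ∞ f) (hQf : ∀ s : ℝ, Q.eval (cexp (c * s)) = u s * f s) {t : ι → ℝ}
    (ht : Injective fun i => cexp (c * t i)) {m : ι → ℕ}
    (hvan : ∀ i, ∀ l < m i, iteratedDeriv l f (t i) = 0) :
    ∑ i, m i ≤ Q.natDegree := by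
  have hmult (i : ι) : m i ≤ Q.rootMultiplicity (cexp (c * t i)) := by
    refine le_rootMultiplicity_of_eval_eulerOp_iterate_eq_zero hc (exp_ne_zero _) hQ
      fun l hl => ?_
    have hfl : ContDiffAt ℝ l f (t i) := hf.contDiffAt.of_le (mod_cast le_top)
    rw [← iteratedDeriv_eval_cexp_mul, funext hQf]
    refine iteratedDeriv_mul_eq_zero (hu.contDiffAt.of_le (mod_cast le_top))
      (ofRealCLM.contDiff.contDiffAt.comp _ hfl) fun k hk => ?_
    rw [iteratedDeriv_ofReal_comp (hfl.of_le (mod_cast hk)), hvan i k (by omega), ofReal_zero]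
  calc ∑ i, m i ≤ ∑ i, Q.rootMultiplicity (cexp (c * t i)) :=
        Finset.sum_le_sum fun i _ => hmult i
    _ = ∑ z ∈ Finset.univ.map ⟨_, ht⟩, Q.rootMultiplicity z := by rw [Finset.sum_map]; rfl
    _ ≤ Q.natDegree := sum_rootMultiplicity_le_natDegree Q _

noncomputable def trigCubic (a b c d : ℝ) : ℂ[X] :=
  C (a - b * I) * X ^ 3 + C (c - d * I) * X ^ 2 + C (c + d * I) * X + C (a + b * I)

lemma trigCubic_natDegree_le (a b c d : ℝ) : (trigCubic a b c d).natDegree ≤ 3 := by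
  unfold trigCubic
  compute_degree

lemma trigCubic_ne_zero {a b c d : ℝ} (h : ¬(a = 0 ∧ b = 0 ∧ c = 0 ∧ d = 0)) :
    trigCubic a b c d ≠ 0 := by
  intro h0
  have h3 := congrArg (coeff · 3) h0
  have h2 := congrArg (coeff · 2) h0
  simp only [trigCubic, coeff_add, coeff_C_mul, coeff_X_pow, coeff_C, coeff_X] at h3 h2
  norm_num [Complex.ext_iff] at h3 h2
  exact h ⟨h3.1, h3.2, h2.1, h2.2⟩

lemma trigCubic_eval_cexp (a b c d θ : ℝ) :
    (trigCubic a b c d).eval (cexp (2 * θ * I)) = 2 * cexp (3 * θ * I) *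
      ↑(a * Real.cos (3 * θ) + b * Real.sin (3 * θ) + c * Real.cos θ + d * Real.sin θ) := by
  set e := cexp (θ * I)
  have he : e ≠ 0 := exp_ne_zero _
  have hpow (n : ℕ) : cexp (n * θ * I) = e ^ n := by
    rw [← Complex.exp_nat_mul]; ring_nf
  have hpow_neg (n : ℕ) : cexp (-(n * θ) * I) = (e ^ n)⁻¹ := by
    rw [← hpow, ← Complex.exp_neg]; ring_nf
  have h1 : cexp (-θ * I) = e⁻¹ := by simpa using hpow_neg 1
  have h2 : cexp (2 * θ * I) = e ^ 2 := mod_cast hpow 2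
  have h3 : cexp (3 * θ * I) = e ^ 3 := mod_cast hpow 3
  have h3' : cexp (-(3 * θ) * I) = (e ^ 3)⁻¹ := mod_cast hpow_neg 3
  simp only [trigCubic, eval_add, eval_mul, eval_pow, eval_C, eval_X, ofReal_add, ofReal_mul,
    ofReal_cos, ofReal_sin, Complex.cos, Complex.sin, ofReal_ofNat]
  rw [h1, h2, h3, h3', show cexp (θ * I) = e from rfl]
  field_simp
  ring

theorem sum_le_three_of_iteratedDeriv_trig_eq_zero {ι : Type*} [Fintype ι] {a b c d w : ℝ}
    (hcoef : ¬(a = 0 ∧ b = 0 ∧ c = 0 ∧ d = 0)) (hw : w ≠ 0) {t : ι → ℝ}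
    (ht : Injective fun i => cexp (2 * w * I * t i)) {m : ι → ℕ}
    (hvan : ∀ i, ∀ l < m i, iteratedDeriv l (fun s => a * Real.cos (3 * (w * s)) +
      b * Real.sin (3 * (w * s)) + c * Real.cos (w * s) + d * Real.sin (w * s)) (t i) = 0) :
    ∑ i, m i ≤ 3 := by
  have hlin : ContDiff ℝ ∞ fun s : ℝ => w * s := contDiff_const.mul contDiff_id
  refine (sum_le_natDegree_of_iteratedDeriv_eq_zero (trigCubic_ne_zero hcoef)
    (by simpa using hw) (u := fun s => 2 * cexp (3 * (w * s : ℝ) * I)) ?_ ?_ (fun s => ?_) ht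
    hvan).trans (trigCubic_natDegree_le a b c d)
  · exact contDiff_const.mul ((contDiff_const.mul (ofRealCLM.contDiff.comp hlin)).mul
      contDiff_const).cexp
  · fun_prop
  · rw [← trigCubic_eval_cexp]
    push_cast
    ring_nf

lemma injOn_cexp_pi_mul_I : InjOn (fun s : ℝ => cexp (π * I * s)) (Ioc (-1) 1) := by
  intro s hs s' hs' h
  have him (x : ℝ) : (π * I * x : ℂ).im = π * x := by simp
  have := exp_inj_of_neg_pi_lt_of_le_pi (by rw [him]; nlinarith [pi_pos, hs.1])
    (by rw [him]; nlinarith [pi_pos, hs.2]) (by rw [him]; nlinarith [pi_pos, hs'.1])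
    (by rw [him]; nlinarith [pi_pos, hs'.2]) h
  simpa [pi_ne_zero, I_ne_zero] using this

lemma dotv_gamma11 (h : Fin 4 → ℝ) (s : ℝ) :
    dotv h (gamma11 s) =
      (h 0 / 4 - √3 * h 2 / 4) * Real.cos (3 * (π / 2 * s)) +
      (√3 * h 1 / 4 - h 3 / 4) * Real.sin (3 * (π / 2 * s)) +
      (3 * h 0 / 4 + √3 * h 2 / 4) * Real.cos (π / 2 * s) +
      (√3 * h 1 / 4 + 3 * h 3 / 4) * Real.sin (π / 2 * s) := by
  simp only [dotv, gamma11, Fin.sum_univ_four, Matrix.cons_val_zero, Matrix.cons_val_one,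
    Matrix.cons_val]
  ring_nf

lemma gamma11_coeffs_ne_zero {h : Fin 4 → ℝ} (hne : h ≠ 0) :
    ¬(h 0 / 4 - √3 * h 2 / 4 = 0 ∧ √3 * h 1 / 4 - h 3 / 4 = 0 ∧
      3 * h 0 / 4 + √3 * h 2 / 4 = 0 ∧ √3 * h 1 / 4 + 3 * h 3 / 4 = 0) := by
  rintro ⟨ha, hb, hc, hd⟩
  have hs : √3 ≠ 0 := by positivity
  apply hne
  ext i
  fin_cases i
  · simpa using (by linarith : h 0 = 0)
  · simpa [hs] using (by linarith : √3 * h 1 = 0)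
  · simpa [hs] using (by linarith : √3 * h 2 = 0)
  · simpa using (by linarith : h 3 = 0)

/-- The curve `γ₁¹ ∈ LS³(−1, k)` is convex: it meets every hyperplane
through the origin of `ℝ⁴` with total multiplicity at most 3 on `(0,1)`. -/
theorem stmt_15 : ∀ h : Fin 4 → ℝ, h ≠ 0 → MultAtMost gamma11 0 1 h 3 := by
  intro h hne j t m ht hinj _ hvan
  refine sum_le_three_of_iteratedDeriv_trig_eq_zero (gamma11_coeffs_ne_zero hne)
    (w := π / 2) (by positivity) ?_ (by simpa only [dotv_gamma11] using hvan)
  have hpi : (2 * ((π / 2 : ℝ) : ℂ)) = π := by push_cast; ring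
  simp only [hpi]
  have hmem (i : Fin j) : t i ∈ Ioc (-1) 1 := ⟨by linarith [(ht i).1], (ht i).2.le⟩
  exact fun i i' hii' => hinj (injOn_cexp_pi_mul_I (hmem i) (hmem i') hii')
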